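/- arXiv:2402.17713 — 10 statements merged into one kernel-verified Lean document; each statement's English description precedes it below -/
import Mathlib

section
/- Let H be a complex Hilbert space and let M, J : H → H be compact linear operators such that ker(J) ∩ ker(I + M) = {0}, where I denotes the identity operator. Then the bounded linear operator I + M*M + M* + M + J*J : H → H (where M* and J* denote the Hilbert-space adjoints) is bijective and has a bounded inverse. -/
open ContinuousLinearMap in
/-- The key coercivity estimate: if `M, J` are compact and
`ker J ⊓ ker (1 + M) = ⊥`, then `‖(1+M) x‖² + ‖J x‖² ≥ c ‖x‖²` for some `c > 0`. -/
lemma stmt_0_coercive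
    {H : Type*} [NormedAddCommGroup H] [InnerProductSpace ℂ H] [CompleteSpace H]
    (M J : H →L[ℂ] H)
    (hM : IsCompactOperator ⇑M)
    (hker : LinearMap.ker (J : H →ₗ[ℂ] H) ⊓ LinearMap.ker ((1 + M : H →L[ℂ] H) : H →ₗ[ℂ] H) = ⊥) :
    ∃ c : ℝ, 0 < c ∧ ∀ x : H, c * ‖x‖ ^ 2 ≤ ‖(1 + M) x‖ ^ 2 + ‖J x‖ ^ 2 := by
  by_contra hc
  push_neg at hc
  -- choose a sequence of unit vectors with `‖A uₙ‖² + ‖J uₙ‖² < 1/(n+1)`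
  have hseq : ∀ n : ℕ, ∃ u : H, ‖u‖ = 1 ∧
      ‖(1 + M) u‖ ^ 2 + ‖J u‖ ^ 2 < 1 / (n + 1) := by
    intro n
    obtain ⟨x, hx⟩ := hc (1 / (n + 1)) (by positivity)
    have hxne : x ≠ 0 := by
      rintro rfl
      simp at hx
    have hxn : (0:ℝ) < ‖x‖ := norm_pos_iff.2 hxne
    refine ⟨‖x‖⁻¹ • x, ?_, ?_⟩
    · simp [norm_smul, inv_mul_cancel₀ hxn.ne']
    · have h1 : (1 + M) (‖x‖⁻¹ • x) = ‖x‖⁻¹ • (1 + M) x := by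
        rw [← map_smul_of_tower]
      have h2 : J (‖x‖⁻¹ • x) = ‖x‖⁻¹ • J x := by
        rw [← map_smul_of_tower]
      rw [h1, h2, norm_smul, norm_smul]
      have : ‖(‖x‖⁻¹ : ℝ)‖ = ‖x‖⁻¹ := by
        rw [Real.norm_eq_abs, abs_of_pos (by positivity)]
      rw [this, mul_pow, mul_pow, ← mul_add]
      have hlt : (‖x‖⁻¹) ^ 2 * (‖(1 + M) x‖ ^ 2 + ‖J x‖ ^ 2)
          < (‖x‖⁻¹) ^ 2 * (1 / ((n : ℝ) + 1) * ‖x‖ ^ 2) :=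
        mul_lt_mul_of_pos_left hx (by positivity)
      have heq : (‖x‖⁻¹) ^ 2 * (1 / ((n : ℝ) + 1) * ‖x‖ ^ 2) = 1 / ((n : ℝ) + 1) := by
        field_simp
      linarith
  choose u hu1 hu2 using hseq
  -- the image of the unit sphere under `M` lies in a compact set
  obtain ⟨K, hK, hKsub⟩ :=
    hM.image_subset_compact_of_bounded (f := (M : H →ₗ[ℂ] H))
      (S := Metric.closedBall (0 : H) 1) Metric.isBounded_closedBall
  have hmem : ∀ n, M (u n) ∈ K := fun n =>
    hKsub ⟨u n, by simp [Metric.mem_closedBall, dist_eq_norm, hu1 n], rfl⟩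
  obtain ⟨y, -, φ, hφ, hlim⟩ := hK.tendsto_subseq hmem
  -- `(1+M) uₙ → 0` and `J uₙ → 0`
  have hA0 : Filter.Tendsto (fun n => (1 + M) (u n)) Filter.atTop (nhds 0) := by
    rw [tendsto_zero_iff_norm_tendsto_zero]
    have hb : Filter.Tendsto (fun n : ℕ => Real.sqrt (1 / (n + 1))) Filter.atTop (nhds 0) := by
      have h0 : Filter.Tendsto (fun n : ℕ => 1 / ((n : ℝ) + 1)) Filter.atTop (nhds 0) :=
        tendsto_one_div_add_atTop_nhds_zero_nat
      have h1 : Filter.Tendsto (fun n : ℕ => Real.sqrt (1 / ((n : ℝ) + 1)))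
          Filter.atTop (nhds (Real.sqrt 0)) := (Real.continuous_sqrt.tendsto 0).comp h0
      simpa using h1
    refine squeeze_zero (fun n => norm_nonneg _) (fun n => ?_) hb
    have h := (hu2 n).le
    have : ‖(1 + M) (u n)‖ ^ 2 ≤ 1 / (n + 1) := by nlinarith [sq_nonneg ‖J (u n)‖]
    calc ‖(1 + M) (u n)‖ = Real.sqrt (‖(1 + M) (u n)‖ ^ 2) := by
          rw [Real.sqrt_sq (norm_nonneg _)]
      _ ≤ Real.sqrt (1 / (n + 1)) := Real.sqrt_le_sqrt this
  have hJ0 : Filter.Tendsto (fun n => J (u n)) Filter.atTop (nhds 0) := by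
    rw [tendsto_zero_iff_norm_tendsto_zero]
    have hb : Filter.Tendsto (fun n : ℕ => Real.sqrt (1 / (n + 1))) Filter.atTop (nhds 0) := by
      have h0 : Filter.Tendsto (fun n : ℕ => 1 / ((n : ℝ) + 1)) Filter.atTop (nhds 0) :=
        tendsto_one_div_add_atTop_nhds_zero_nat
      have h1 : Filter.Tendsto (fun n : ℕ => Real.sqrt (1 / ((n : ℝ) + 1)))
          Filter.atTop (nhds (Real.sqrt 0)) := (Real.continuous_sqrt.tendsto 0).comp h0
      simpa using h1
    refine squeeze_zero (fun n => norm_nonneg _) (fun n => ?_) hb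
    have h := (hu2 n).le
    have : ‖J (u n)‖ ^ 2 ≤ 1 / (n + 1) := by nlinarith [sq_nonneg ‖(1 + M) (u n)‖]
    calc ‖J (u n)‖ = Real.sqrt (‖J (u n)‖ ^ 2) := by
          rw [Real.sqrt_sq (norm_nonneg _)]
      _ ≤ Real.sqrt (1 / (n + 1)) := Real.sqrt_le_sqrt this
  -- hence `u (φ n) → -y`
  have huy : Filter.Tendsto (fun n => u (φ n)) Filter.atTop (nhds (-y)) := by
    have h1 : ∀ n, u (φ n) = (1 + M) (u (φ n)) - M (u (φ n)) := by
      intro n; simp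
    have h2 : Filter.Tendsto (fun n => (1 + M) (u (φ n)) - M (u (φ n)))
        Filter.atTop (nhds (0 - y)) :=
      Filter.Tendsto.sub (hA0.comp hφ.tendsto_atTop) hlim
    rw [zero_sub] at h2
    exact h2.congr (fun n => (h1 n).symm)
  -- `-y` has norm 1, yet lies in `ker J ⊓ ker (1+M)`: contradiction
  have hny : ‖(-y : H)‖ = 1 := by
    have := Filter.Tendsto.comp continuous_norm.continuousAt.tendsto huy
    have h1 : Filter.Tendsto (fun n => ‖u (φ n)‖) Filter.atTop (nhds ‖(-y : H)‖) := this
    have h2 : Filter.Tendsto (fun n => ‖u (φ n)‖) Filter.atTop (nhds 1) := by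
      simpa [hu1] using tendsto_const_nhds (x := (1:ℝ)) (f := Filter.atTop (α := ℕ))
    exact tendsto_nhds_unique h1 h2
  have hAy : (1 + M) (-y) = 0 := by
    have h1 : Filter.Tendsto (fun n => (1 + M) (u (φ n))) Filter.atTop (nhds ((1 + M) (-y))) :=
      ((1 + M).continuous.continuousAt.tendsto).comp huy
    have h2 : Filter.Tendsto (fun n => (1 + M) (u (φ n))) Filter.atTop (nhds 0) :=
      hA0.comp hφ.tendsto_atTop
    exact tendsto_nhds_unique h1 h2
  have hJy : J (-y) = 0 := by
    have h1 : Filter.Tendsto (fun n => J (u (φ n))) Filter.atTop (nhds (J (-y))) :=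
      (J.continuous.continuousAt.tendsto).comp huy
    have h2 : Filter.Tendsto (fun n => J (u (φ n))) Filter.atTop (nhds 0) :=
      hJ0.comp hφ.tendsto_atTop
    exact tendsto_nhds_unique h1 h2
  have : (-y : H) ∈ LinearMap.ker (J : H →ₗ[ℂ] H) ⊓ LinearMap.ker ((1 + M : H →L[ℂ] H) : H →ₗ[ℂ] H) := ⟨hJy, hAy⟩
  rw [hker] at this
  simp only [Submodule.mem_bot] at this
  rw [this] at hny
  simp at hny

/-- Let `H` be a complex Hilbert space and `M, J : H → H` compact linear
operators with `ker J ∩ ker (I + M) = {0}`. Then `I + M*M + M* + M + J*J` is bijective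
with a bounded inverse (i.e. has a two-sided continuous linear inverse). -/
theorem stmt_0
    {H : Type*} [NormedAddCommGroup H] [InnerProductSpace ℂ H] [CompleteSpace H]
    (M J : H →L[ℂ] H)
    (hM : IsCompactOperator ⇑M) (hJ : IsCompactOperator ⇑J)
    (hker : LinearMap.ker (J : H →ₗ[ℂ] H) ⊓ LinearMap.ker ((1 + M : H →L[ℂ] H) : H →ₗ[ℂ] H) = ⊥) :
    Function.Bijective
      ⇑(1 + ContinuousLinearMap.adjoint M * M + ContinuousLinearMap.adjoint M + M
          + ContinuousLinearMap.adjoint J * J) ∧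
    ∃ T' : H →L[ℂ] H,
      T' * (1 + ContinuousLinearMap.adjoint M * M + ContinuousLinearMap.adjoint M + M
          + ContinuousLinearMap.adjoint J * J) = 1 ∧
      (1 + ContinuousLinearMap.adjoint M * M + ContinuousLinearMap.adjoint M + M
          + ContinuousLinearMap.adjoint J * J) * T' = 1 := by
  classical
  obtain ⟨c, hc0, hcoer⟩ := stmt_0_coercive M J hM hker
  set A : H →L[ℂ] H := 1 + M with hA
  set T : H →L[ℂ] H :=
    1 + ContinuousLinearMap.adjoint M * M + ContinuousLinearMap.adjoint M + M
      + ContinuousLinearMap.adjoint J * J with hT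
  have hTfact : T = ContinuousLinearMap.adjoint A * A + ContinuousLinearMap.adjoint J * J := by
    rw [hT, hA]
    simp only [← ContinuousLinearMap.star_eq_adjoint, star_add, star_one]
    noncomm_ring
  -- the inner product ⟪T x, x⟫ is real and equals ‖A x‖² + ‖J x‖²
  have hinner : ∀ x : H, (inner ℂ (T x) x : ℂ) = ((‖A x‖ ^ 2 + ‖J x‖ ^ 2 : ℝ) : ℂ) := by
    intro x
    rw [hTfact]
    simp only [ContinuousLinearMap.add_apply, ContinuousLinearMap.mul_apply,
      inner_add_left, ContinuousLinearMap.adjoint_inner_left]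
    rw [inner_self_eq_norm_sq_to_K, inner_self_eq_norm_sq_to_K]
    norm_cast
  -- lower bound: c ‖x‖ ≤ ‖T x‖
  have hbound : ∀ x : H, c * ‖x‖ ≤ ‖T x‖ := by
    intro x
    rcases eq_or_ne x 0 with rfl | hx
    · simp
    have hxn : (0:ℝ) < ‖x‖ := norm_pos_iff.2 hx
    have h1 : c * ‖x‖ ^ 2 ≤ ‖A x‖ ^ 2 + ‖J x‖ ^ 2 := hcoer x
    have h2 : ‖A x‖ ^ 2 + ‖J x‖ ^ 2 ≤ ‖T x‖ * ‖x‖ := by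
      have := norm_inner_le_norm (𝕜 := ℂ) (T x) x
      rw [hinner x] at this
      have habs : ‖((‖A x‖ ^ 2 + ‖J x‖ ^ 2 : ℝ) : ℂ)‖ = ‖A x‖ ^ 2 + ‖J x‖ ^ 2 := by
        rw [Complex.norm_real, Real.norm_eq_abs, abs_of_nonneg (by positivity)]
      rwa [habs] at this
    have h3 : c * ‖x‖ ^ 2 ≤ ‖T x‖ * ‖x‖ := le_trans h1 h2
    nlinarith
  -- injectivity
  have hinj : Function.Injective ⇑T := by
    intro x y hxy
    have h0 : ‖T (x - y)‖ = 0 := by rw [map_sub, hxy, sub_self, norm_zero]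
    have h1 := hbound (x - y)
    rw [h0] at h1
    have h2 : ‖x - y‖ ≤ 0 := by nlinarith
    have h3 : x - y = 0 := norm_eq_zero.mp (le_antisymm h2 (norm_nonneg _))
    exact sub_eq_zero.mp h3
  -- the range of T is closed
  have hanti : AntilipschitzWith (⟨c, hc0.le⟩ : NNReal)⁻¹ ⇑T := by
    apply ContinuousLinearMap.antilipschitz_of_bound
    intro x
    have h1 := hbound x
    change ‖x‖ ≤ c⁻¹ * ‖T x‖
    have : ‖x‖ ≤ c⁻¹ * ‖T x‖ := by
      rw [le_inv_mul_iff₀ hc0]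
      linarith
    exact this
  have hclosed : IsClosed (Set.range ⇑T) := hanti.isClosed_range T.uniformContinuous
  have hclosedS : IsClosed ((LinearMap.range (T : H →ₗ[ℂ] H) : Submodule ℂ H) : Set H) := by
    have : ((LinearMap.range (T : H →ₗ[ℂ] H) : Submodule ℂ H) : Set H) = Set.range ⇑T := by
      ext x; simp [LinearMap.mem_range]
    rw [this]; exact hclosed
  -- the range of T is dense, hence all of H
  have htop : LinearMap.range (T : H →ₗ[ℂ] H) = ⊤ := by
    haveI : CompleteSpace (LinearMap.range (T : H →ₗ[ℂ] H) : Submodule ℂ H) := hclosedS.completeSpace_coe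
    rw [← Submodule.orthogonal_eq_bot_iff]
    rw [Submodule.eq_bot_iff]
    intro v hv
    have h0 : (inner ℂ (T v) v : ℂ) = 0 :=
      (Submodule.mem_orthogonal _ v).mp hv (T v) (LinearMap.mem_range_self _ v)
    rw [hinner v] at h0
    have h1 : ‖A v‖ ^ 2 + ‖J v‖ ^ 2 = 0 := by exact_mod_cast h0
    have h2 : c * ‖v‖ ^ 2 ≤ 0 := by rw [← h1]; exact hcoer v
    by_contra hv0
    have hvp : (0:ℝ) < ‖v‖ := norm_pos_iff.2 hv0
    nlinarith [mul_pos hc0 (pow_pos hvp 2)]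
  have hsurj : Function.Surjective ⇑T := LinearMap.range_eq_top.mp htop
  refine ⟨⟨hinj, hsurj⟩, ?_⟩
  have hkerT : LinearMap.ker (T : H →ₗ[ℂ] H) = ⊥ := LinearMap.ker_eq_bot.mpr hinj
  let e := ContinuousLinearEquiv.ofBijective T hkerT htop
  refine ⟨(e.symm : H →L[ℂ] H), ?_, ?_⟩
  · ext x
    simp only [ContinuousLinearMap.mul_apply, ContinuousLinearMap.coe_coe,
      ContinuousLinearMap.one_apply]
    exact ContinuousLinearEquiv.ofBijective_symm_apply_apply T hkerT htop x
  · ext x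
    simp only [ContinuousLinearMap.mul_apply, ContinuousLinearMap.coe_coe,
      ContinuousLinearMap.one_apply]
    exact ContinuousLinearEquiv.ofBijective_apply_symm_apply T hkerT htop x
end

section
/- Let H be a complex Hilbert space and let M, J : H → H be compact linear operators such that ker(J) ∩ ker(I + M) = {0}. Let b ∈ H and suppose x₀ ∈ H satisfies the constrained system (I + M)x₀ = b and J x₀ = 0. Then x₀ is the unique solution in H of the single equation (I + M*M + M* + M + J*J) x = (I + M*) b. -/
set_option maxHeartbeats 1000000

lemma adjoint_one' {H : Type*} [NormedAddCommGroup H] [InnerProductSpace ℂ H]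
    [CompleteSpace H] : ContinuousLinearMap.adjoint (1 : H →L[ℂ] H) = 1 := by
  rw [← ContinuousLinearMap.star_eq_adjoint]; exact star_one _

/-- If `x₀` solves the constrained system `(I + M) x₀ = b`, `J x₀ = 0`,
then `x₀` is the unique solution of `(I + M*M + M* + M + J*J) x = (I + M*) b`. -/
theorem stmt_1
    {H : Type*} [NormedAddCommGroup H] [InnerProductSpace ℂ H] [CompleteSpace H]
    (M J : H →L[ℂ] H)
    (hM : IsCompactOperator ⇑M) (hJ : IsCompactOperator ⇑J)
    (hker : LinearMap.ker (J : H →ₗ[ℂ] H) ⊓ LinearMap.ker ((1 + M : H →L[ℂ] H) : H →ₗ[ℂ] H) = ⊥)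
    (b x₀ : H)
    (hx₀ : (1 + M) x₀ = b) (hJx₀ : J x₀ = 0) :
    (1 + ContinuousLinearMap.adjoint M * M + ContinuousLinearMap.adjoint M + M
        + ContinuousLinearMap.adjoint J * J) x₀ = (1 + ContinuousLinearMap.adjoint M) b ∧
    ∀ x : H,
      (1 + ContinuousLinearMap.adjoint M * M + ContinuousLinearMap.adjoint M + M
        + ContinuousLinearMap.adjoint J * J) x = (1 + ContinuousLinearMap.adjoint M) b →
      x = x₀ := by
  have hop : (1 + ContinuousLinearMap.adjoint M * M + ContinuousLinearMap.adjoint M + M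
      + ContinuousLinearMap.adjoint J * J)
      = ContinuousLinearMap.adjoint (1 + M) * (1 + M) + ContinuousLinearMap.adjoint J * J := by
    rw [map_add, adjoint_one']
    noncomm_ring
  have key : ∀ z : H, ((ContinuousLinearMap.adjoint (1 + M) * (1 + M)
      + ContinuousLinearMap.adjoint J * J : H →L[ℂ] H)) z
      = ContinuousLinearMap.adjoint (1 + M) ((1 + M) z) + ContinuousLinearMap.adjoint J (J z) :=
    fun z => by
      simp [ContinuousLinearMap.add_apply, ContinuousLinearMap.mul_apply]
  have hAad : ContinuousLinearMap.adjoint (1 + M) = 1 + ContinuousLinearMap.adjoint M := by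
    rw [map_add, adjoint_one']
  have hsol : (1 + ContinuousLinearMap.adjoint M * M + ContinuousLinearMap.adjoint M + M
      + ContinuousLinearMap.adjoint J * J) x₀ = (1 + ContinuousLinearMap.adjoint M) b := by
    rw [hop, key, hx₀, hJx₀, map_zero, add_zero, hAad]
  refine ⟨hsol, fun x hx => ?_⟩
  rw [hop] at hx hsol
  have hy : ((ContinuousLinearMap.adjoint (1 + M) * (1 + M)
      + ContinuousLinearMap.adjoint J * J : H →L[ℂ] H)) (x - x₀) = 0 := by
    rw [map_sub, hx, hsol, sub_self]
  have hinner : (inner ℂ (((ContinuousLinearMap.adjoint (1 + M) * (1 + M)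
      + ContinuousLinearMap.adjoint J * J : H →L[ℂ] H)) (x - x₀)) (x - x₀) : ℂ) = 0 := by
    rw [hy, inner_zero_left]
  rw [key, inner_add_left, ContinuousLinearMap.adjoint_inner_left,
    ContinuousLinearMap.adjoint_inner_left] at hinner
  have h1 : (‖(1 + M) (x - x₀)‖:ℝ)^2 + (‖J (x - x₀)‖:ℝ)^2 = 0 := by
    have := congrArg (RCLike.re (K := ℂ)) hinner
    simpa [map_add, inner_self_eq_norm_sq, ← Complex.ofReal_pow, Complex.ofReal_re] using this
  have hA0 : (1 + M) (x - x₀) = 0 := by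
    rw [← norm_eq_zero]
    nlinarith [norm_nonneg ((1 + M) (x - x₀)), norm_nonneg (J (x - x₀)),
      sq_nonneg (‖(1 + M) (x - x₀)‖), sq_nonneg (‖J (x - x₀)‖)]
  have hJ0 : J (x - x₀) = 0 := by
    rw [← norm_eq_zero]
    nlinarith [norm_nonneg ((1 + M) (x - x₀)), norm_nonneg (J (x - x₀)),
      sq_nonneg (‖(1 + M) (x - x₀)‖), sq_nonneg (‖J (x - x₀)‖)]
  have hmem : x - x₀ ∈ LinearMap.ker (J : H →ₗ[ℂ] H) ⊓ LinearMap.ker ((1 + M : H →L[ℂ] H) : H →ₗ[ℂ] H) := ⟨hJ0, hA0⟩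
  rw [hker, Submodule.mem_bot] at hmem
  exact sub_eq_zero.mp hmem
end

section
/- Let H be a complex Hilbert space, let M, J : H → H be compact linear operators, and let P be the orthogonal projection of H onto ker(I + M). Assume there are constants C₁, C₂ > 0 such that for all x ∈ H, ‖(I − P)x‖ ≤ C₁ ‖(I + M)(I − P)x‖ and ‖P x‖ ≤ C₂ ‖J(Px)‖. Suppose x, d ∈ H satisfy (I + M)*(I + M)x + J*J x = d with d orthogonal to ker(I + M). Then ‖x‖² ≤ ( C₂² (C₁ + C₁² ‖J‖)² + C₁⁴ ) ‖d‖², where ‖J‖ is the operator norm of J. -/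
/-- With `P` the orthogonal projection onto `ker (I + M)`, constants
`C₁, C₂ > 0` with `‖(I - P) x‖ ≤ C₁ ‖(I + M)(I - P) x‖` and `‖P x‖ ≤ C₂ ‖J (P x)‖` for all
`x`, if `(I + M)*(I + M) x + J*J x = d` with `d ⟂ ker (I + M)`, then
`‖x‖² ≤ (C₂² (C₁ + C₁² ‖J‖)² + C₁⁴) ‖d‖²`. -/
theorem stmt_5
    {H : Type*} [NormedAddCommGroup H] [InnerProductSpace ℂ H] [CompleteSpace H]
    (M J : H →L[ℂ] H)
    (hM : IsCompactOperator ⇑M) (hJ : IsCompactOperator ⇑J)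
    (P : H →L[ℂ] H)
    (hPmem : ∀ y : H, P y ∈ LinearMap.ker ((1 + M : H →L[ℂ] H) : H →ₗ[ℂ] H))
    (hPorth : ∀ y : H, y - P y ∈ (LinearMap.ker ((1 + M : H →L[ℂ] H) : H →ₗ[ℂ] H))ᗮ)
    (C₁ C₂ : ℝ) (hC₁ : 0 < C₁) (hC₂ : 0 < C₂)
    (hC₁bound : ∀ y : H, ‖y - P y‖ ≤ C₁ * ‖(1 + M) (y - P y)‖)
    (hC₂bound : ∀ y : H, ‖P y‖ ≤ C₂ * ‖J (P y)‖)
    (x d : H)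
    (heq : (ContinuousLinearMap.adjoint (1 + M) * (1 + M)
        + ContinuousLinearMap.adjoint J * J : H →L[ℂ] H) x = d)
    (hd : d ∈ (LinearMap.ker ((1 + M : H →L[ℂ] H) : H →ₗ[ℂ] H))ᗮ) :
    ‖x‖ ^ 2 ≤ (C₂ ^ 2 * (C₁ + C₁ ^ 2 * ‖J‖) ^ 2 + C₁ ^ 4) * ‖d‖ ^ 2 := by
  set A : H →L[ℂ] H := 1 + M with hA
  set p := P x with hp
  set q := x - P x with hq
  have hxpq : x = p + q := by simp [hp, hq]
  have hAp : A p = 0 := by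
    have := hPmem x
    rw [LinearMap.mem_ker] at this
    exact this
  have hAx : A x = A q := by
    rw [hxpq, map_add, hAp, zero_add]
  have heq' : ContinuousLinearMap.adjoint A (A x) + ContinuousLinearMap.adjoint J (J x) = d := by
    simpa [ContinuousLinearMap.add_apply, ContinuousLinearMap.mul_apply] using heq
  have hdp : (inner ℂ p d : ℂ) = 0 := hd p (hPmem x)
  have hdp' : (inner ℂ d p : ℂ) = 0 := by rw [← inner_conj_symm, hdp, map_zero]
  -- inner with p
  have key1 : (inner ℂ (J x) (J p) : ℂ) = 0 := by
    have h := congrArg (fun z => (inner ℂ z p : ℂ)) heq'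
    simp only [inner_add_left, ContinuousLinearMap.adjoint_inner_left, hAp, inner_zero_right,
      zero_add, hdp'] at h
    exact h
  -- inner with x
  have key2 : (‖A x‖ ^ 2 + ‖J x‖ ^ 2 : ℂ) = inner ℂ d x := by
    have h := congrArg (fun z => (inner ℂ z x : ℂ)) heq'
    simp only [inner_add_left, ContinuousLinearMap.adjoint_inner_left] at h
    rw [inner_self_eq_norm_sq_to_K, inner_self_eq_norm_sq_to_K] at h
    push_cast at h ⊢
    exact h
  have hdx : (inner ℂ d x : ℂ) = inner ℂ d q := by
    rw [hxpq, inner_add_right, hdp', zero_add]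
  have hAq2 : ‖A q‖ ^ 2 ≤ ‖d‖ * ‖q‖ := by
    have hre : ‖A x‖ ^ 2 + ‖J x‖ ^ 2 = Complex.re (inner ℂ d q) := by
      have h2 : ((‖A x‖ ^ 2 + ‖J x‖ ^ 2 : ℝ) : ℂ) = inner ℂ d q := by
        push_cast; rw [← hdx]; exact key2
      rw [← h2, Complex.ofReal_re]
    rw [hAx] at hre
    have hcs : Complex.re (inner ℂ d q : ℂ) ≤ ‖d‖ * ‖q‖ := re_inner_le_norm (𝕜 := ℂ) d q
    nlinarith [sq_nonneg ‖J x‖]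
  have hAq2' : ‖A q‖ ^ 2 ≤ ‖d‖ * ‖q‖ := hAq2
  have hq1 : ‖q‖ ≤ C₁ * ‖A q‖ := hC₁bound x
  have hqd : ‖q‖ ≤ C₁ ^ 2 * ‖d‖ := by
    rcases eq_or_lt_of_le (norm_nonneg q) with h0 | h0
    · nlinarith [norm_nonneg d]
    · nlinarith [norm_nonneg (A q), norm_nonneg d]
  -- bound on Jp
  have hJpq : ‖J p‖ ≤ ‖J q‖ := by
    have hsum : (inner ℂ (J p) (J p) : ℂ) + inner ℂ (J q) (J p) = 0 := by
      have : (inner ℂ (J p + J q) (J p) : ℂ) = 0 := by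
        rw [← map_add, ← hxpq]; exact key1
      rwa [inner_add_left] at this
    have hre := congrArg Complex.re hsum
    simp only [Complex.add_re, Complex.zero_re] at hre
    have hself : (inner ℂ (J p) (J p) : ℂ).re = ‖J p‖ ^ 2 := by
      rw [← RCLike.re_to_complex]; exact inner_self_eq_norm_sq (J p)
    rw [hself] at hre
    have habs : |Complex.re (inner ℂ (J q) (J p) : ℂ)| ≤ ‖(inner ℂ (J q) (J p) : ℂ)‖ := by
      rw [← RCLike.re_to_complex]; exact RCLike.abs_re_le_norm _
    have h2 : ‖(inner ℂ (J q) (J p) : ℂ)‖ ≤ ‖J q‖ * ‖J p‖ := norm_inner_le_norm _ _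
    have h1 : (‖J p‖ ^ 2 : ℝ) ≤ ‖J q‖ * ‖J p‖ := by
      have := abs_le.mp habs
      nlinarith
    rcases eq_or_lt_of_le (norm_nonneg (J p)) with h0 | h0
    · rw [← h0]; exact norm_nonneg _
    · have h1' : ‖J p‖ * ‖J p‖ ≤ ‖J q‖ * ‖J p‖ := by
        calc ‖J p‖ * ‖J p‖ = ‖J p‖ ^ 2 := (sq ‖J p‖).symm
          _ ≤ ‖J q‖ * ‖J p‖ := h1
      exact le_of_mul_le_mul_right h1' h0
  have hpd : ‖p‖ ≤ C₂ * (‖J‖ * (C₁ ^ 2 * ‖d‖)) := by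
    have h1 : ‖p‖ ≤ C₂ * ‖J p‖ := hC₂bound x
    have h2 : ‖J q‖ ≤ ‖J‖ * ‖q‖ := J.le_opNorm q
    have h3 : ‖J‖ * ‖q‖ ≤ ‖J‖ * (C₁ ^ 2 * ‖d‖) :=
      mul_le_mul_of_nonneg_left hqd (norm_nonneg J)
    calc ‖p‖ ≤ C₂ * ‖J p‖ := h1
      _ ≤ C₂ * (‖J‖ * (C₁ ^ 2 * ‖d‖)) := by
          apply mul_le_mul_of_nonneg_left _ hC₂.le
          exact le_trans hJpq (le_trans h2 h3)
  -- Pythagoras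
  have hpq0 : (inner ℂ p q : ℂ) = 0 := (hPorth x) p (hPmem x)
  have hpyth : ‖x‖ ^ 2 = ‖p‖ ^ 2 + ‖q‖ ^ 2 := by
    rw [hxpq, norm_add_sq (𝕜 := ℂ), hpq0]
    simp
  rw [hpyth]
  have hJn : (0:ℝ) ≤ ‖J‖ := norm_nonneg J
  have hdn : (0:ℝ) ≤ ‖d‖ := norm_nonneg d
  have h1 : ‖p‖ ^ 2 ≤ (C₂ * (‖J‖ * (C₁ ^ 2 * ‖d‖))) ^ 2 :=
    pow_le_pow_left₀ (norm_nonneg p) hpd 2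
  have h2 : ‖q‖ ^ 2 ≤ C₁ ^ 4 * ‖d‖ ^ 2 := by
    calc ‖q‖ ^ 2 ≤ (C₁ ^ 2 * ‖d‖) ^ 2 := pow_le_pow_left₀ (norm_nonneg q) hqd 2
      _ = C₁ ^ 4 * ‖d‖ ^ 2 := by ring
  have key : (C₁ ^ 2 * ‖J‖) ^ 2 ≤ (C₁ + C₁ ^ 2 * ‖J‖) ^ 2 :=
    pow_le_pow_left₀ (by positivity) (le_add_of_nonneg_left hC₁.le) 2
  have h3 : (C₂ * (‖J‖ * (C₁ ^ 2 * ‖d‖))) ^ 2 ≤ C₂ ^ 2 * (C₁ + C₁ ^ 2 * ‖J‖) ^ 2 * ‖d‖ ^ 2 := by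
    have e : (C₂ * (‖J‖ * (C₁ ^ 2 * ‖d‖))) ^ 2 = C₂ ^ 2 * (C₁ ^ 2 * ‖J‖) ^ 2 * ‖d‖ ^ 2 := by ring
    rw [e]
    exact mul_le_mul_of_nonneg_right
      (mul_le_mul_of_nonneg_left key (sq_nonneg C₂)) (sq_nonneg ‖d‖)
  have e2 : (C₂ ^ 2 * (C₁ + C₁ ^ 2 * ‖J‖) ^ 2 + C₁ ^ 4) * ‖d‖ ^ 2
      = C₂ ^ 2 * (C₁ + C₁ ^ 2 * ‖J‖) ^ 2 * ‖d‖ ^ 2 + C₁ ^ 4 * ‖d‖ ^ 2 := by ring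
  rw [e2]
  exact add_le_add (le_trans h1 h3) h2
end

section
/- Let H be a complex Hilbert space, let M, J : H → H be compact linear operators, and let P be the orthogonal projection of H onto ker(I + M). Suppose x, d ∈ H satisfy (I + M)*(I + M)x + J*J x = d with d ∈ ker(I + M) (equivalently, P d = d). Then ‖(I + M)(I − P)x‖² + (1/2) ‖J x‖² ≤ (1/2) ‖J (P x)‖². -/
/-- With `P` the orthogonal projection onto `ker (I + M)`, if
`(I + M)*(I + M) x + J*J x = d` with `d ∈ ker (I + M)`, then
`‖(I + M)(I - P) x‖² + (1/2) ‖J x‖² ≤ (1/2) ‖J (P x)‖²`. -/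
theorem stmt_6
    {H : Type*} [NormedAddCommGroup H] [InnerProductSpace ℂ H] [CompleteSpace H]
    (M J : H →L[ℂ] H)
    (hM : IsCompactOperator ⇑M) (hJ : IsCompactOperator ⇑J)
    (P : H →L[ℂ] H)
    (hPmem : ∀ y : H, P y ∈ LinearMap.ker ((1 + M : H →L[ℂ] H) : H →ₗ[ℂ] H))
    (hPorth : ∀ y : H, y - P y ∈ (LinearMap.ker ((1 + M : H →L[ℂ] H) : H →ₗ[ℂ] H))ᗮ)
    (x d : H)
    (heq : (ContinuousLinearMap.adjoint (1 + M) * (1 + M)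
        + ContinuousLinearMap.adjoint J * J : H →L[ℂ] H) x = d)
    (hd : d ∈ LinearMap.ker ((1 + M : H →L[ℂ] H) : H →ₗ[ℂ] H)) :
    ‖(1 + M) (x - P x)‖ ^ 2 + (1 / 2) * ‖J x‖ ^ 2 ≤ (1 / 2) * ‖J (P x)‖ ^ 2 := by
  set A : H →L[ℂ] H := 1 + M with hA
  have hAP : ∀ y : H, A (P y) = 0 := fun y => hPmem y
  have hAx : A (x - P x) = A x := by
    rw [map_sub, hAP x, sub_zero]
  -- main identity
  have hkey : (‖A x‖ ^ 2 : ℂ) + (‖J x‖ ^ 2 : ℂ) = inner ℂ (J x) (J (P x)) := by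
    have h1 : inner ℂ ((ContinuousLinearMap.adjoint A * A
        + ContinuousLinearMap.adjoint J * J : H →L[ℂ] H) x) x = (inner ℂ d x : ℂ) := by
      rw [heq]
    have h2 : (inner ℂ d x : ℂ) = inner ℂ d (P x) := by
      have h0 : (inner ℂ d (x - P x) : ℂ) = 0 := (hPorth x) d hd
      rw [inner_sub_right] at h0
      exact sub_eq_zero.mp h0
    have h3 : (inner ℂ d (P x) : ℂ) = inner ℂ (J x) (J (P x)) := by
      have hd' : (ContinuousLinearMap.adjoint A * A
          + ContinuousLinearMap.adjoint J * J : H →L[ℂ] H) x = d := heq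
      rw [← hd']
      simp only [ContinuousLinearMap.add_apply, ContinuousLinearMap.mul_apply,
        inner_add_left, ContinuousLinearMap.adjoint_inner_left, hAP x,
        inner_zero_right, zero_add]
    have h4 : inner ℂ ((ContinuousLinearMap.adjoint A * A
        + ContinuousLinearMap.adjoint J * J : H →L[ℂ] H) x) x
        = (‖A x‖ ^ 2 : ℂ) + (‖J x‖ ^ 2 : ℂ) := by
      simp only [ContinuousLinearMap.add_apply, ContinuousLinearMap.mul_apply,
        inner_add_left, ContinuousLinearMap.adjoint_inner_left]
      rw [inner_self_eq_norm_sq_to_K, inner_self_eq_norm_sq_to_K]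
      norm_cast
    rw [← h4, h1, h2, h3]
  have hre : ‖A x‖ ^ 2 + ‖J x‖ ^ 2 = (inner ℂ (J x) (J (P x)) : ℂ).re := by
    have := congrArg Complex.re hkey
    simp [Complex.add_re, ← Complex.ofReal_pow] at this
    linarith
  have hbound : (inner ℂ (J x) (J (P x)) : ℂ).re ≤ ‖J x‖ * ‖J (P x)‖ := by
    calc (inner ℂ (J x) (J (P x)) : ℂ).re ≤ ‖(inner ℂ (J x) (J (P x)) : ℂ)‖ :=
          Complex.re_le_norm _
      _ ≤ ‖J x‖ * ‖J (P x)‖ := norm_inner_le_norm _ _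
  rw [hAx]
  nlinarith [hre, hbound, sq_nonneg (‖J x‖ - ‖J (P x)‖)]
end

section
/- Let H be a complex Hilbert space, let M, J : H → H be compact linear operators, and let P be the orthogonal projection of H onto ker(I + M). Assume there are constants C₁, C₂ > 0 such that for all x ∈ H, ‖(I − P)x‖ ≤ C₁ ‖(I + M)(I − P)x‖ and ‖P x‖ ≤ C₂ ‖J(Px)‖. Suppose x, d ∈ H satisfy (I + M)*(I + M)x + J*J x = d with d ∈ ker(I + M). Then ‖P x‖² ≤ C₂⁴ (2 + C₁² ‖J‖²)² ‖d‖². -/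
open scoped InnerProductSpace

/-- With `P` the orthogonal projection onto `ker (I + M)`, constants
`C₁, C₂ > 0` as in Statements 2 and 3, if `(I + M)*(I + M) x + J*J x = d` with
`d ∈ ker (I + M)`, then `‖P x‖² ≤ C₂⁴ (2 + C₁² ‖J‖²)² ‖d‖²`. -/
theorem stmt_7
    {H : Type*} [NormedAddCommGroup H] [InnerProductSpace ℂ H] [CompleteSpace H]
    (M J : H →L[ℂ] H)
    (hM : IsCompactOperator ⇑M) (hJ : IsCompactOperator ⇑J)
    (P : H →L[ℂ] H)
    (hPmem : ∀ y : H, P y ∈ LinearMap.ker ((1 + M : H →L[ℂ] H) : H →ₗ[ℂ] H))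
    (hPorth : ∀ y : H, y - P y ∈ (LinearMap.ker ((1 + M : H →L[ℂ] H) : H →ₗ[ℂ] H))ᗮ)
    (C₁ C₂ : ℝ) (hC₁ : 0 < C₁) (hC₂ : 0 < C₂)
    (hC₁bound : ∀ y : H, ‖y - P y‖ ≤ C₁ * ‖(1 + M) (y - P y)‖)
    (hC₂bound : ∀ y : H, ‖P y‖ ≤ C₂ * ‖J (P y)‖)
    (x d : H)
    (heq : (ContinuousLinearMap.adjoint (1 + M) * (1 + M)
        + ContinuousLinearMap.adjoint J * J : H →L[ℂ] H) x = d)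
    (hd : d ∈ LinearMap.ker ((1 + M : H →L[ℂ] H) : H →ₗ[ℂ] H)) :
    ‖P x‖ ^ 2 ≤ C₂ ^ 4 * (2 + C₁ ^ 2 * ‖J‖ ^ 2) ^ 2 * ‖d‖ ^ 2 := by
  set A : H →L[ℂ] H := 1 + M with hA
  have hAPx : A (P x) = 0 := hPmem x
  -- inner product of equation with x
  have hdx : (inner ℂ x d : ℂ) = ((‖A x‖ ^ 2 + ‖J x‖ ^ 2 : ℝ) : ℂ) := by
    have hd' : d = ContinuousLinearMap.adjoint A (A x) + ContinuousLinearMap.adjoint J (J x) := by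
      rw [← heq]; rfl
    rw [hd', inner_add_right, ContinuousLinearMap.adjoint_inner_right,
        ContinuousLinearMap.adjoint_inner_right, inner_self_eq_norm_sq_to_K,
        inner_self_eq_norm_sq_to_K]
    norm_cast
  -- ⟪x - Px, d⟫ = 0
  have horth : (inner ℂ (x - P x) d : ℂ) = 0 := by
    exact (Submodule.mem_orthogonal' _ _).mp (hPorth x) d hd
  have hPxd : (inner ℂ (P x) d : ℂ) = ((‖A x‖ ^ 2 + ‖J x‖ ^ 2 : ℝ) : ℂ) := by
    have : (inner ℂ (P x) d : ℂ) = inner ℂ x d - inner ℂ (x - P x) d := by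
      rw [inner_sub_left]; ring
    rw [this, horth, hdx, sub_zero]
  have hkey : ‖A x‖ ^ 2 + ‖J x‖ ^ 2 ≤ ‖P x‖ * ‖d‖ := by
    have h2 := norm_inner_le_norm (𝕜 := ℂ) (P x) d
    rw [hPxd, Complex.norm_real, Real.norm_eq_abs, abs_of_nonneg (by positivity)] at h2
    exact h2
  -- bound on ‖J (P x)‖
  have hJP : ‖J (P x)‖ ≤ ‖J x‖ + C₁ * ‖J‖ * ‖A x‖ := by
    have h3 : J (P x) = J x - J (x - P x) := by
      rw [map_sub, sub_sub_cancel]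
    have h4 : ‖J (x - P x)‖ ≤ ‖J‖ * ‖x - P x‖ := J.le_opNorm _
    have h6 : A (x - P x) = A x := by rw [map_sub, hAPx, sub_zero]
    have h5 : ‖x - P x‖ ≤ C₁ * ‖A x‖ := by
      have := hC₁bound x
      rwa [h6] at this
    calc ‖J (P x)‖ = ‖J x - J (x - P x)‖ := by rw [h3]
      _ ≤ ‖J x‖ + ‖J (x - P x)‖ := norm_sub_le _ _
      _ ≤ ‖J x‖ + ‖J‖ * (C₁ * ‖A x‖) := by
          have : ‖J‖ * ‖x - P x‖ ≤ ‖J‖ * (C₁ * ‖A x‖) :=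
            mul_le_mul_of_nonneg_left h5 (norm_nonneg _)
          linarith
      _ = ‖J x‖ + C₁ * ‖J‖ * ‖A x‖ := by ring
  have hPx : ‖P x‖ ≤ C₂ * (‖J x‖ + C₁ * ‖J‖ * ‖A x‖) := by
    calc ‖P x‖ ≤ C₂ * ‖J (P x)‖ := hC₂bound x
      _ ≤ C₂ * (‖J x‖ + C₁ * ‖J‖ * ‖A x‖) := by
          exact mul_le_mul_of_nonneg_left hJP hC₂.le
  -- ‖Px‖² ≤ C₂²(2+C₁²‖J‖²)(‖Ax‖²+‖Jx‖²)
  have hP2 : ‖P x‖ ^ 2 ≤ C₂ ^ 2 * (2 + C₁ ^ 2 * ‖J‖ ^ 2) * (‖A x‖ ^ 2 + ‖J x‖ ^ 2) := by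
    have hnn : (0:ℝ) ≤ ‖P x‖ := norm_nonneg _
    have hsq : ‖P x‖ ^ 2 ≤ C₂ ^ 2 * (‖J x‖ + C₁ * ‖J‖ * ‖A x‖) ^ 2 := by
      have := pow_le_pow_left₀ hnn hPx 2
      calc ‖P x‖ ^ 2 ≤ (C₂ * (‖J x‖ + C₁ * ‖J‖ * ‖A x‖)) ^ 2 := this
        _ = C₂ ^ 2 * (‖J x‖ + C₁ * ‖J‖ * ‖A x‖) ^ 2 := by ring
    have h7 : (‖J x‖ + C₁ * ‖J‖ * ‖A x‖) ^ 2
        ≤ (2 + C₁ ^ 2 * ‖J‖ ^ 2) * (‖A x‖ ^ 2 + ‖J x‖ ^ 2) := by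
      nlinarith [sq_nonneg (‖A x‖ - C₁ * ‖J‖ * ‖J x‖), sq_nonneg (‖A x‖), sq_nonneg (‖J x‖)]
    calc ‖P x‖ ^ 2 ≤ C₂ ^ 2 * (‖J x‖ + C₁ * ‖J‖ * ‖A x‖) ^ 2 := hsq
      _ ≤ C₂ ^ 2 * ((2 + C₁ ^ 2 * ‖J‖ ^ 2) * (‖A x‖ ^ 2 + ‖J x‖ ^ 2)) :=
        mul_le_mul_of_nonneg_left h7 (sq_nonneg C₂)
      _ = C₂ ^ 2 * (2 + C₁ ^ 2 * ‖J‖ ^ 2) * (‖A x‖ ^ 2 + ‖J x‖ ^ 2) := by ring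
  -- combine
  set c : ℝ := C₂ ^ 2 * (2 + C₁ ^ 2 * ‖J‖ ^ 2) with hc
  have hcpos : 0 < c := by positivity
  have hcomb : ‖P x‖ ^ 2 ≤ c * (‖P x‖ * ‖d‖) := by
    calc ‖P x‖ ^ 2 ≤ c * (‖A x‖ ^ 2 + ‖J x‖ ^ 2) := hP2
      _ ≤ c * (‖P x‖ * ‖d‖) := mul_le_mul_of_nonneg_left hkey hcpos.le
  have hfin : ‖P x‖ ≤ c * ‖d‖ := by
    rcases eq_or_lt_of_le (norm_nonneg (P x)) with h | h
    · rw [← h]; positivity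
    · have := hcomb
      rw [pow_two] at this
      nlinarith
  have : ‖P x‖ ^ 2 ≤ (c * ‖d‖) ^ 2 := by
    apply sq_le_sq' _ hfin
    nlinarith [norm_nonneg (P x), mul_nonneg hcpos.le (norm_nonneg d)]
  calc ‖P x‖ ^ 2 ≤ (c * ‖d‖) ^ 2 := this
    _ = C₂ ^ 4 * (2 + C₁ ^ 2 * ‖J‖ ^ 2) ^ 2 * ‖d‖ ^ 2 := by rw [hc]; ring
end

section
/- Let H be a complex Hilbert space, let M, J : H → H be compact linear operators, and let P be the orthogonal projection of H onto ker(I + M). Assume there are constants C₁, C₂ > 0 such that for all x ∈ H, ‖(I − P)x‖ ≤ C₁ ‖(I + M)(I − P)x‖ and ‖P x‖ ≤ C₂ ‖J(Px)‖. Suppose x, d ∈ H satisfy (I + M)*(I + M)x + J*J x = d with d ∈ ker(I + M). Then ‖(I − P)x‖² ≤ C₁² C₂² (2 + C₁² ‖J‖²) ‖d‖². -/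
/-- With `P` the orthogonal projection onto `ker (I + M)`, constants
`C₁, C₂ > 0` as in Statements 2 and 3, if `(I + M)*(I + M) x + J*J x = d` with
`d ∈ ker (I + M)`, then `‖(I - P) x‖² ≤ C₁² C₂² (2 + C₁² ‖J‖²) ‖d‖²`. -/
theorem stmt_8
    {H : Type*} [NormedAddCommGroup H] [InnerProductSpace ℂ H] [CompleteSpace H]
    (M J : H →L[ℂ] H)
    (hM : IsCompactOperator ⇑M) (hJ : IsCompactOperator ⇑J)
    (P : H →L[ℂ] H)
    (hPmem : ∀ y : H, P y ∈ LinearMap.ker ((1 + M : H →L[ℂ] H) : H →ₗ[ℂ] H))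
    (hPorth : ∀ y : H, y - P y ∈ (LinearMap.ker ((1 + M : H →L[ℂ] H) : H →ₗ[ℂ] H))ᗮ)
    (C₁ C₂ : ℝ) (hC₁ : 0 < C₁) (hC₂ : 0 < C₂)
    (hC₁bound : ∀ y : H, ‖y - P y‖ ≤ C₁ * ‖(1 + M) (y - P y)‖)
    (hC₂bound : ∀ y : H, ‖P y‖ ≤ C₂ * ‖J (P y)‖)
    (x d : H)
    (heq : (ContinuousLinearMap.adjoint (1 + M) * (1 + M)
        + ContinuousLinearMap.adjoint J * J : H →L[ℂ] H) x = d)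
    (hd : d ∈ LinearMap.ker ((1 + M : H →L[ℂ] H) : H →ₗ[ℂ] H)) :
    ‖x - P x‖ ^ 2 ≤ C₁ ^ 2 * C₂ ^ 2 * (2 + C₁ ^ 2 * ‖J‖ ^ 2) * ‖d‖ ^ 2 := by
  set A : H →L[ℂ] H := 1 + M with hA
  -- A (P x) = 0
  have hAu : A (P x) = 0 := hPmem x
  -- ⟪d, x⟫ = ‖A x‖² + ‖J x‖²
  have h1 : (inner ℂ d x : ℂ) = (‖A x‖ : ℂ) ^ 2 + (‖J x‖ : ℂ) ^ 2 := by
    rw [← heq]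
    simp only [ContinuousLinearMap.add_apply, ContinuousLinearMap.mul_apply,
      inner_add_left, ContinuousLinearMap.adjoint_inner_left]
    rw [inner_self_eq_norm_sq_to_K, inner_self_eq_norm_sq_to_K]
    norm_cast
  -- ⟪d, x - P x⟫ = 0
  have h2 : (inner ℂ d (x - P x) : ℂ) = 0 := (hPorth x) d hd
  have h3 : (inner ℂ d (P x) : ℂ) = (‖A x‖ : ℂ) ^ 2 + (‖J x‖ : ℂ) ^ 2 := by
    have : (inner ℂ d (P x) : ℂ) = inner ℂ d x - inner ℂ d (x - P x) := by
      rw [inner_sub_right]; ring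
    rw [this, h2, h1]; ring
  have h4 : ‖A x‖ ^ 2 + ‖J x‖ ^ 2 = RCLike.re (inner ℂ d (P x) : ℂ) := by
    rw [h3, RCLike.re_to_complex]
    simp [← Complex.ofReal_pow]
  -- A x = A (x - P x)
  have hAx : A x = A (x - P x) := by rw [map_sub, hAu, sub_zero]
  have h5 : RCLike.re (inner ℂ d (P x) : ℂ) ≤ ‖d‖ * ‖P x‖ := re_inner_le_norm d (P x)
  have h6 : ‖P x‖ ≤ C₂ * ‖J (P x)‖ := hC₂bound x
  have h7 : ‖J (P x)‖ ≤ ‖J x‖ + ‖J‖ * ‖x - P x‖ := by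
    have : J (P x) = J x - J (x - P x) := by rw [map_sub]; abel
    rw [this]
    calc ‖J x - J (x - P x)‖ ≤ ‖J x‖ + ‖J (x - P x)‖ := norm_sub_le _ _
      _ ≤ ‖J x‖ + ‖J‖ * ‖x - P x‖ := by
          have := J.le_opNorm (x - P x); linarith
  have h8 : ‖x - P x‖ ≤ C₁ * ‖A (x - P x)‖ := hC₁bound x
  -- abbreviations
  set a := ‖A (x - P x)‖ with ha
  set j := ‖J x‖ with hj
  set D := ‖d‖ with hD
  have hkey : a ^ 2 + j ^ 2 ≤ D * (C₂ * (j + ‖J‖ * ‖x - P x‖)) := by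
    have h4' : a ^ 2 + j ^ 2 = RCLike.re (inner ℂ d (P x) : ℂ) := by rw [← h4, hAx]
    have : ‖P x‖ ≤ C₂ * (j + ‖J‖ * ‖x - P x‖) := by
      calc ‖P x‖ ≤ C₂ * ‖J (P x)‖ := h6
        _ ≤ C₂ * (j + ‖J‖ * ‖x - P x‖) := by
            apply mul_le_mul_of_nonneg_left h7 hC₂.le
    nlinarith [norm_nonneg d, h5]
  have hJnn : (0:ℝ) ≤ ‖J‖ := norm_nonneg J
  have hDnn : (0:ℝ) ≤ D := norm_nonneg d
  have hann : (0:ℝ) ≤ a := norm_nonneg _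
  have hjnn : (0:ℝ) ≤ j := norm_nonneg _
  clear_value a j D
  clear h1 h2 h3 h4 h5 h6 h7 heq hd hAx hAu hPmem hPorth hC₁bound hC₂bound hM hJ
  have hvnn : (0:ℝ) ≤ ‖x - P x‖ := norm_nonneg _
  -- from hkey and h8, conclude
  have hkey2 : a ^ 2 + j ^ 2 ≤ D * C₂ * j + D * C₂ * ‖J‖ * C₁ * a := by
    have h8' : D * C₂ * ‖J‖ * ‖x - P x‖ ≤ D * C₂ * ‖J‖ * (C₁ * a) :=
      mul_le_mul_of_nonneg_left h8 (by positivity)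
    nlinarith [hkey]
  have haub : a ^ 2 ≤ C₂ ^ 2 * (1 + C₁ ^ 2 * ‖J‖ ^ 2) * D ^ 2 := by
    nlinarith [sq_nonneg (j - C₂ * D), sq_nonneg (a - C₂ * C₁ * ‖J‖ * D)]
  have hv2 : ‖x - P x‖ ^ 2 ≤ C₁ ^ 2 * a ^ 2 := by nlinarith [h8]
  calc ‖x - P x‖ ^ 2 ≤ C₁ ^ 2 * a ^ 2 := hv2
    _ ≤ C₁ ^ 2 * (C₂ ^ 2 * (1 + C₁ ^ 2 * ‖J‖ ^ 2) * D ^ 2) :=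
        mul_le_mul_of_nonneg_left haub (sq_nonneg C₁)
    _ ≤ C₁ ^ 2 * C₂ ^ 2 * (2 + C₁ ^ 2 * ‖J‖ ^ 2) * D ^ 2 := by
        nlinarith [sq_nonneg (C₁ * C₂ * D)]
end

section
/- Let H be a complex Hilbert space, let M, J : H → H be compact linear operators with ker(J) ∩ ker(I + M) = {0}, and let P be the orthogonal projection of H onto ker(I + M). Assume there are constants C₁, C₂ > 0 such that for all x ∈ H, ‖(I − P)x‖ ≤ C₁ ‖(I + M)(I − P)x‖ and ‖P x‖ ≤ C₂ ‖J(Px)‖. Then for every d ∈ H and every x ∈ H satisfying (I + M)*(I + M)x + J*J x = d, one has ‖x‖ ≤ [ √( C₂² (C₁ + C₁² ‖J‖)² + C₁⁴ ) + √( C₂⁴ (2 + C₁² ‖J‖²)² + C₁² C₂² (2 + C₁² ‖J‖²) ) ] ‖d‖. In particular, the norm of the inverse of (I + M)*(I + M) + J*J is bounded by a constant depending only on C₁, C₂ and ‖J‖. -/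
set_option maxHeartbeats 1000000 in
/-- With `ker J ∩ ker (I + M) = {0}`, `P` the orthogonal projection onto
`ker (I + M)`, and constants `C₁, C₂ > 0` as in Statements 2 and 3, every solution `x` of
`(I + M)*(I + M) x + J*J x = d` satisfies
`‖x‖ ≤ (√(C₂²(C₁ + C₁²‖J‖)² + C₁⁴) + √(C₂⁴(2 + C₁²‖J‖²)² + C₁²C₂²(2 + C₁²‖J‖²))) ‖d‖`. -/
theorem stmt_9
    {H : Type*} [NormedAddCommGroup H] [InnerProductSpace ℂ H] [CompleteSpace H]
    (M J : H →L[ℂ] H)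
    (hM : IsCompactOperator ⇑M) (hJ : IsCompactOperator ⇑J)
    (hker : LinearMap.ker (J : H →ₗ[ℂ] H) ⊓ LinearMap.ker (((1 + M : H →L[ℂ] H)) : H →ₗ[ℂ] H) = ⊥)
    (P : H →L[ℂ] H)
    (hPmem : ∀ y : H, P y ∈ LinearMap.ker (((1 + M : H →L[ℂ] H)) : H →ₗ[ℂ] H))
    (hPorth : ∀ y : H, y - P y ∈ (LinearMap.ker (((1 + M : H →L[ℂ] H)) : H →ₗ[ℂ] H))ᗮ)
    (C₁ C₂ : ℝ) (hC₁ : 0 < C₁) (hC₂ : 0 < C₂)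
    (hC₁bound : ∀ y : H, ‖y - P y‖ ≤ C₁ * ‖(1 + M) (y - P y)‖)
    (hC₂bound : ∀ y : H, ‖P y‖ ≤ C₂ * ‖J (P y)‖) :
    ∀ d x : H,
      (ContinuousLinearMap.adjoint (1 + M) * (1 + M)
        + ContinuousLinearMap.adjoint J * J : H →L[ℂ] H) x = d →
      ‖x‖ ≤ (Real.sqrt (C₂ ^ 2 * (C₁ + C₁ ^ 2 * ‖J‖) ^ 2 + C₁ ^ 4)
          + Real.sqrt (C₂ ^ 4 * (2 + C₁ ^ 2 * ‖J‖ ^ 2) ^ 2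
              + C₁ ^ 2 * C₂ ^ 2 * (2 + C₁ ^ 2 * ‖J‖ ^ 2))) * ‖d‖ := by
  intro d x hx
  have hAp : (1 + M) (P x) = 0 := LinearMap.mem_ker.mp (hPmem x)
  have hAq : (1 + M) (x - P x) = (1 + M) x := by
    rw [map_sub, hAp, sub_zero]
  -- pairing the equation with x
  have hCS : ‖(1 + M) x‖^2 + ‖J x‖^2 ≤ ‖d‖ * ‖x‖ := by
    have key : ∀ A : H →L[ℂ] H,
        RCLike.re (inner ℂ ((ContinuousLinearMap.adjoint A * A) x) x : ℂ) = ‖A x‖^2 := by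
      intro A
      rw [ContinuousLinearMap.mul_apply, ContinuousLinearMap.adjoint_inner_left,
        inner_self_eq_norm_sq]
    have h1 : RCLike.re (inner ℂ d x : ℂ) = ‖(1 + M) x‖^2 + ‖J x‖^2 := by
      rw [← hx, ContinuousLinearMap.add_apply, inner_add_left, map_add, key, key]
    rw [← h1]
    exact (RCLike.re_le_norm _).trans (norm_inner_le_norm d x)
  -- orthogonal decomposition
  have hip : (inner ℂ (P x) (x - P x) : ℂ) = 0 :=
    Submodule.inner_right_of_mem_orthogonal (hPmem x) (hPorth x)
  have hsum : ‖x‖^2 = ‖P x‖^2 + ‖x - P x‖^2 := by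
    have hx' : P x + (x - P x) = x := by abel
    calc ‖x‖^2 = ‖P x + (x - P x)‖^2 := by rw [hx']
      _ = ‖P x‖^2 + 2 * RCLike.re (inner ℂ (P x) (x - P x) : ℂ) + ‖x - P x‖^2 :=
          norm_add_sq (𝕜 := ℂ) _ _
      _ = ‖P x‖^2 + ‖x - P x‖^2 := by rw [hip]; simp
  have hq : ‖x - P x‖ ≤ C₁ * ‖(1 + M) x‖ := by
    rw [← hAq]; exact hC₁bound x
  have hJp : ‖J (P x)‖ ≤ ‖J x‖ + ‖J‖ * ‖x - P x‖ := by
    have h2 : J (P x) = J x - J (x - P x) := by rw [map_sub]; abel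
    rw [h2]
    exact (norm_sub_le _ _).trans (add_le_add_right (J.le_opNorm _) _)
  have hp : ‖P x‖ ≤ C₂ * (‖J x‖ + ‖J‖ * (C₁ * ‖(1 + M) x‖)) := by
    have h3 : ‖J (P x)‖ ≤ ‖J x‖ + ‖J‖ * (C₁ * ‖(1 + M) x‖) :=
      hJp.trans (add_le_add_right (mul_le_mul_of_nonneg_left hq (norm_nonneg J)) _)
    exact (hC₂bound x).trans (mul_le_mul_of_nonneg_left h3 hC₂.le)
  have ha0 : (0:ℝ) ≤ ‖(1 + M) x‖ := norm_nonneg _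
  have hb0 : (0:ℝ) ≤ ‖J x‖ := norm_nonneg _
  have ht0 : (0:ℝ) ≤ ‖J‖ := norm_nonneg _
  have hD0 : (0:ℝ) ≤ ‖d‖ := norm_nonneg _
  have hpsq : ‖P x‖^2 ≤ (C₂ * (‖J x‖ + ‖J‖ * (C₁ * ‖(1 + M) x‖)))^2 :=
    pow_le_pow_left₀ (norm_nonneg _) hp 2
  have hqsq : ‖x - P x‖^2 ≤ C₁^2 * ‖(1 + M) x‖^2 := by
    nlinarith [hq, norm_nonneg (x - P x)]
  have hK'0 : (0:ℝ) ≤ C₂^2 + C₂^2*C₁^2*‖J‖^2 + C₁^2 := by positivity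
  have h5 : (C₂^2 + C₂^2*C₁^2*‖J‖^2 + C₁^2) * (‖(1 + M) x‖^2 + ‖J x‖^2)
      ≤ (C₂^2 + C₂^2*C₁^2*‖J‖^2 + C₁^2) * (‖d‖ * ‖x‖) := mul_le_mul_of_nonneg_left hCS hK'0
  have hX2 : ‖x‖^2 ≤ (C₁^2 + C₂^2*(2 + C₁^2*‖J‖^2)) * ‖d‖ * ‖x‖ := by
    nlinarith [hsum, hpsq, hqsq, h5, sq_nonneg (C₂*‖(1 + M) x‖ - C₂*C₁*‖J‖*‖J x‖),
      mul_nonneg hD0 (norm_nonneg x), sq_nonneg C₂]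
  have hXK : ‖x‖ ≤ (C₁^2 + C₂^2*(2 + C₁^2*‖J‖^2)) * ‖d‖ := by
    rcases (norm_nonneg x).eq_or_lt with h0 | h0
    · rw [← h0]
      have : (0:ℝ) ≤ C₁^2 + C₂^2*(2 + C₁^2*‖J‖^2) := by positivity
      exact mul_nonneg this hD0
    · nlinarith [hX2, h0]
  have s1 : C₁^2 ≤ Real.sqrt (C₂^2 * (C₁ + C₁^2*‖J‖)^2 + C₁^4) := by
    calc C₁^2 = Real.sqrt ((C₁^2)^2) := (Real.sqrt_sq (by positivity)).symm
      _ ≤ Real.sqrt (C₂^2 * (C₁ + C₁^2*‖J‖)^2 + C₁^4) := by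
          apply Real.sqrt_le_sqrt
          nlinarith [mul_nonneg (sq_nonneg C₂) (sq_nonneg (C₁ + C₁^2*‖J‖))]
  have s2 : C₂^2 * (2 + C₁^2*‖J‖^2)
      ≤ Real.sqrt (C₂^4 * (2 + C₁^2*‖J‖^2)^2 + C₁^2 * C₂^2 * (2 + C₁^2*‖J‖^2)) := by
    have h20 : (0:ℝ) ≤ 2 + C₁^2*‖J‖^2 := by positivity
    calc C₂^2 * (2 + C₁^2*‖J‖^2) = Real.sqrt ((C₂^2 * (2 + C₁^2*‖J‖^2))^2) :=
          (Real.sqrt_sq (by positivity)).symm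
      _ ≤ _ := by
          apply Real.sqrt_le_sqrt
          nlinarith [mul_nonneg (mul_nonneg (sq_nonneg C₁) (sq_nonneg C₂)) h20]
  calc ‖x‖ ≤ (C₁^2 + C₂^2*(2 + C₁^2*‖J‖^2)) * ‖d‖ := hXK
    _ ≤ (Real.sqrt (C₂ ^ 2 * (C₁ + C₁ ^ 2 * ‖J‖) ^ 2 + C₁ ^ 4)
          + Real.sqrt (C₂ ^ 4 * (2 + C₁ ^ 2 * ‖J‖ ^ 2) ^ 2
              + C₁ ^ 2 * C₂ ^ 2 * (2 + C₁ ^ 2 * ‖J‖ ^ 2))) * ‖d‖ :=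
        mul_le_mul_of_nonneg_right (by linarith [add_le_add s1 s2]) hD0
end

section
/- Let H be a complex Hilbert space and let M, J : H → H be compact linear operators. Assume ker(I + M) = {0} and that there is a constant C₁ > 0 with ‖x‖ ≤ C₁ ‖(I + M)x‖ for all x ∈ H. Then for every d ∈ H and every x ∈ H satisfying (I + M)*(I + M)x + J*J x = d, one has ‖x‖ ≤ C₁² ‖d‖; that is, the operator norm of the inverse of I + M*M + M* + M + J*J is bounded by C₁². -/
/-- If `ker (I + M) = {0}` and `‖x‖ ≤ C₁ ‖(I + M) x‖` for all `x`, then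
every solution `x` of `(I + M)*(I + M) x + J*J x = d` satisfies `‖x‖ ≤ C₁² ‖d‖`;
that is, the inverse of `I + M*M + M* + M + J*J` has operator norm at most `C₁²`. -/
theorem stmt_10
    {H : Type*} [NormedAddCommGroup H] [InnerProductSpace ℂ H] [CompleteSpace H]
    (M J : H →L[ℂ] H)
    (hM : IsCompactOperator ⇑M) (hJ : IsCompactOperator ⇑J)
    (hker : LinearMap.ker ((1 + M : H →L[ℂ] H) : H →ₗ[ℂ] H) = ⊥)
    (C₁ : ℝ) (hC₁ : 0 < C₁)
    (hC₁bound : ∀ y : H, ‖y‖ ≤ C₁ * ‖(1 + M) y‖) :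
    ∀ d x : H,
      (ContinuousLinearMap.adjoint (1 + M) * (1 + M)
        + ContinuousLinearMap.adjoint J * J : H →L[ℂ] H) x = d →
      ‖x‖ ≤ C₁ ^ 2 * ‖d‖ := by
  intro d x hdx
  set A := (1 + M : H →L[ℂ] H)
  have key : (inner ℂ d x : ℂ).re = ‖A x‖ ^ 2 + ‖J x‖ ^ 2 := by
    rw [← hdx]
    simp only [ContinuousLinearMap.add_apply, ContinuousLinearMap.mul_apply]
    rw [inner_add_left, ContinuousLinearMap.adjoint_inner_left,
      ContinuousLinearMap.adjoint_inner_left]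
    rw [Complex.add_re]; congr 1 <;> simpa [sq] using inner_self_eq_norm_sq (𝕜 := ℂ) _
  have h1 : ‖x‖ ^ 2 ≤ C₁ ^ 2 * (inner ℂ d x : ℂ).re := by
    rw [key]
    have := hC₁bound x
    nlinarith [norm_nonneg (J x), norm_nonneg (A x), norm_nonneg x, sq_nonneg (‖J x‖)]
  have h2 : (inner ℂ d x : ℂ).re ≤ ‖d‖ * ‖x‖ := by
    calc (inner ℂ d x : ℂ).re ≤ ‖(inner ℂ d x : ℂ)‖ := Complex.re_le_norm _
      _ ≤ ‖d‖ * ‖x‖ := norm_inner_le_norm d x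
  have h3 : ‖x‖ ^ 2 ≤ C₁ ^ 2 * (‖d‖ * ‖x‖) := by
    refine h1.trans ?_
    exact mul_le_mul_of_nonneg_left h2 (by positivity)
  rcases eq_or_lt_of_le (norm_nonneg x) with h | h
  · rw [← h]; positivity
  · nlinarith
end

section
/- Let H be a complex Hilbert space and let M, J : H → H be compact linear operators with ker(J) ∩ ker(I + M) = {0}, so that I + M*M + M* + M + J*J is invertible with bounded inverse. Let (Lₙ)ₙ be a sequence of bounded linear operators on H such that ‖M*(I − Lₙ)M‖ + ‖(I − Lₙ)M*‖ + ‖(I − Lₙ)M‖ + ‖J*(I − Lₙ)J‖ → 0 as n → ∞. Then there exists N such that for all n ≥ N the operator I + M* Lₙ M + Lₙ M* + Lₙ M + J* Lₙ J is invertible with bounded inverse, and the operator norms ‖(I + M* Lₙ M + Lₙ M* + Lₙ M + J* Lₙ J)⁻¹‖ are uniformly bounded for n ≥ N. -/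
open ContinuousLinearMap Filter

lemma aux_inner {H : Type*} [NormedAddCommGroup H] [InnerProductSpace ℂ H] [CompleteSpace H]
    (M J : H →L[ℂ] H) (x : H) :
    inner ℂ ((1 + adjoint M * M + adjoint M + M + adjoint J * J) x) x
      = ((‖(1+M) x‖^2 + ‖J x‖^2 : ℝ) : ℂ) := by
  have : inner ℂ ((1 + adjoint M * M + adjoint M + M + adjoint J * J) x) x
      = inner ℂ ((1+M) x) ((1+M) x) + (inner ℂ (J x) (J x) : ℂ) := by
    simp only [ContinuousLinearMap.add_apply, ContinuousLinearMap.mul_apply,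
      ContinuousLinearMap.one_apply, inner_add_left, inner_add_right, adjoint_inner_left]
    ring
  rw [this, inner_self_eq_norm_sq_to_K, inner_self_eq_norm_sq_to_K]
  norm_cast

lemma aux_sq_le {H : Type*} [NormedAddCommGroup H] [InnerProductSpace ℂ H] [CompleteSpace H]
    (M J : H →L[ℂ] H) (x : H) :
    ‖(1+M) x‖^2 + ‖J x‖^2 ≤ ‖(1 + adjoint M * M + adjoint M + M + adjoint J * J) x‖ * ‖x‖ := by
  calc ‖(1+M) x‖^2 + ‖J x‖^2
      = ‖(((‖(1+M) x‖^2 + ‖J x‖^2 : ℝ)) : ℂ)‖ := by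
        rw [Complex.norm_real, Real.norm_of_nonneg (by positivity)]
    _ = ‖(inner ℂ ((1 + adjoint M * M + adjoint M + M + adjoint J * J) x) x : ℂ)‖ := by
        rw [aux_inner]
    _ ≤ _ := norm_inner_le_norm _ _

lemma aux_lb {H : Type*} [NormedAddCommGroup H] [InnerProductSpace ℂ H] [CompleteSpace H]
    (M J : H →L[ℂ] H)
    (hM : IsCompactOperator ⇑M)
    (hker : LinearMap.ker (J : H →ₗ[ℂ] H) ⊓ LinearMap.ker ((1 + M : H →L[ℂ] H) : H →ₗ[ℂ] H) = ⊥) :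
    ∃ c > 0, ∀ x, c * ‖x‖ ≤ ‖(1 + adjoint M * M + adjoint M + M + adjoint J * J) x‖ := by
  set T := 1 + adjoint M * M + adjoint M + M + adjoint J * J with hT
  by_contra hcon
  push_neg at hcon
  have hx : ∀ n : ℕ, ∃ x : H, ‖T x‖ < (1 / (n+1)) * ‖x‖ := by
    intro n
    obtain ⟨x, hx⟩ := hcon (1 / (n+1)) (by positivity)
    exact ⟨x, hx⟩
  choose x hxlt using hx
  have hxne : ∀ n, x n ≠ 0 := by
    intro n h
    have := hxlt n
    rw [h] at this
    simp at this
  set u : ℕ → H := fun n => (‖x n‖⁻¹ : ℂ) • x n with hu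
  have hun : ∀ n, ‖u n‖ = 1 := by
    intro n
    rw [hu]
    simp [norm_smul, inv_mul_cancel₀ (norm_ne_zero_iff.mpr (hxne n))]
  have hTu : ∀ n, ‖T (u n)‖ < 1 / (n+1) := by
    intro n
    rw [hu]
    simp only [map_smul, norm_smul]
    have h1 := hxlt n
    have h2 : (0:ℝ) < ‖x n‖ := norm_pos_iff.mpr (hxne n)
    calc ‖((‖x n‖⁻¹ : ℂ))‖ * ‖T (x n)‖ = ‖x n‖⁻¹ * ‖T (x n)‖ := by
          simp
      _ < ‖x n‖⁻¹ * ((1 / (n+1)) * ‖x n‖) := by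
          apply mul_lt_mul_of_pos_left h1 (by positivity)
      _ = 1 / (n+1) := by field_simp
  have hT0 : Tendsto (fun n => ‖T (u n)‖) atTop (nhds 0) := by
    apply squeeze_zero (fun n => norm_nonneg _) (fun n => le_of_lt (hTu n))
    exact tendsto_one_div_add_atTop_nhds_zero_nat
  -- the two pieces tend to 0
  have hsq : ∀ n, ‖(1+M) (u n)‖^2 + ‖J (u n)‖^2 ≤ ‖T (u n)‖ := by
    intro n
    have := aux_sq_le M J (u n)
    rwa [hun n, mul_one] at this
  have hsqrt : Tendsto (fun n => Real.sqrt ‖T (u n)‖) atTop (nhds 0) := by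
    have := (Real.continuous_sqrt.tendsto 0).comp hT0
    simpa [Function.comp_def] using this
  have h1M : Tendsto (fun n => (1+M) (u n)) atTop (nhds 0) := by
    rw [tendsto_zero_iff_norm_tendsto_zero]
    apply squeeze_zero (fun n => norm_nonneg _) _ hsqrt
    intro n
    rw [← Real.sqrt_sq (norm_nonneg ((1+M) (u n)))]
    apply Real.sqrt_le_sqrt
    nlinarith [hsq n, sq_nonneg ‖J (u n)‖]
  have hJ0 : Tendsto (fun n => J (u n)) atTop (nhds 0) := by
    rw [tendsto_zero_iff_norm_tendsto_zero]
    apply squeeze_zero (fun n => norm_nonneg _) _ hsqrt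
    intro n
    rw [← Real.sqrt_sq (norm_nonneg (J (u n)))]
    apply Real.sqrt_le_sqrt
    nlinarith [hsq n, sq_nonneg ‖(1+M) (u n)‖]
  -- compactness: subsequence of M (u n) converges
  obtain ⟨K, hK, hKmem⟩ := hM
  obtain ⟨ε, hε, hball⟩ := Metric.mem_nhds_iff.mp hKmem
  have hmem : ∀ n, ((ε/2 : ℝ) : ℂ) • M (u n) ∈ K := by
    intro n
    have : ((ε/2 : ℝ) : ℂ) • u n ∈ Metric.ball (0:H) ε := by
      rw [Metric.mem_ball, dist_zero_right, norm_smul, hun n, mul_one]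
      simp only [Complex.norm_real]
      rw [Real.norm_of_nonneg (by positivity)]
      linarith
    have h2 := hball this
    rw [Set.mem_preimage, map_smul] at h2
    exact h2
  obtain ⟨a, haK, φ, hφ, hconv⟩ := hK.tendsto_subseq hmem
  have hMu : Tendsto (fun k => M (u (φ k))) atTop (nhds (((ε/2 : ℝ) : ℂ)⁻¹ • a)) := by
    have : Tendsto (fun k => ((ε/2 : ℝ) : ℂ)⁻¹ • (((ε/2 : ℝ) : ℂ) • M (u (φ k)))) atTop
        (nhds (((ε/2 : ℝ) : ℂ)⁻¹ • a)) := hconv.const_smul _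
    have hne : ((ε/2 : ℝ) : ℂ) ≠ 0 := by
      rw [ne_eq, Complex.ofReal_eq_zero]
      positivity
    have h3 : ∀ k, (((ε/2 : ℝ) : ℂ))⁻¹ • ((((ε/2 : ℝ) : ℂ)) • M (u (φ k))) = M (u (φ k)) := by
      intro k; rw [smul_smul, inv_mul_cancel₀ hne, one_smul]
    simp only [h3] at this
    exact this
  set w : H := ((ε/2 : ℝ) : ℂ)⁻¹ • a with hw
  have huconv : Tendsto (fun k => u (φ k)) atTop (nhds (-w)) := by
    have : ∀ k, u (φ k) = (1+M) (u (φ k)) - M (u (φ k)) := by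
      intro k
      simp [ContinuousLinearMap.add_apply]
    simp_rw [funext this]
    have := (h1M.comp hφ.tendsto_atTop).sub hMu
    simpa using this
  have hwnorm : ‖(-w : H)‖ = 1 := by
    have := (continuous_norm.tendsto (-w)).comp huconv
    simp only [Function.comp_def] at this
    simp_rw [hun] at this
    exact tendsto_nhds_unique tendsto_const_nhds this |>.symm
  have hw1M : (1+M) (-w) = 0 := by
    have h1 := ((1+M).continuous.tendsto (-w)).comp huconv
    have h2 := h1M.comp hφ.tendsto_atTop
    exact tendsto_nhds_unique h1 h2
  have hwJ : J (-w) = 0 := by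
    have h1 := (J.continuous.tendsto (-w)).comp huconv
    have h2 := hJ0.comp hφ.tendsto_atTop
    exact tendsto_nhds_unique h1 h2
  have : (-w : H) ∈ LinearMap.ker (J : H →ₗ[ℂ] H) ⊓ LinearMap.ker ((1 + M : H →L[ℂ] H) : H →ₗ[ℂ] H) := by
    constructor
    · exact hwJ
    · exact hw1M
  rw [hker] at this
  simp only [Submodule.mem_bot] at this
  rw [this] at hwnorm
  simp at hwnorm

/-- Let `M, J` be compact operators on a complex Hilbert space with
`ker J ∩ ker (I + M) = {0}`, and let `(Lₙ)` be bounded operators with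
`‖M*(I - Lₙ)M‖ + ‖(I - Lₙ)M*‖ + ‖(I - Lₙ)M‖ + ‖J*(I - Lₙ)J‖ → 0`. Then for all
sufficiently large `n`, the operator `I + M* Lₙ M + Lₙ M* + Lₙ M + J* Lₙ J` is invertible
with bounded inverse, and the inverses are uniformly bounded in operator norm. -/
theorem stmt_12
    {H : Type*} [NormedAddCommGroup H] [InnerProductSpace ℂ H] [CompleteSpace H]
    (M J : H →L[ℂ] H)
    (hM : IsCompactOperator ⇑M) (hJ : IsCompactOperator ⇑J)
    (hker : LinearMap.ker (J : H →ₗ[ℂ] H) ⊓ LinearMap.ker ((1 + M : H →L[ℂ] H) : H →ₗ[ℂ] H) = ⊥)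
    (L : ℕ → H →L[ℂ] H)
    (hL : Filter.Tendsto
      (fun n : ℕ =>
        ‖ContinuousLinearMap.adjoint M * (1 - L n) * M‖
        + ‖(1 - L n) * ContinuousLinearMap.adjoint M‖
        + ‖(1 - L n) * M‖
        + ‖ContinuousLinearMap.adjoint J * (1 - L n) * J‖)
      Filter.atTop (nhds 0)) :
    ∃ N : ℕ, ∃ C : ℝ, ∀ n ≥ N,
      ∃ T' : H →L[ℂ] H,
        T' * (1 + ContinuousLinearMap.adjoint M * L n * M + L n * ContinuousLinearMap.adjoint M
            + L n * M + ContinuousLinearMap.adjoint J * L n * J) = 1 ∧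
        (1 + ContinuousLinearMap.adjoint M * L n * M + L n * ContinuousLinearMap.adjoint M
            + L n * M + ContinuousLinearMap.adjoint J * L n * J) * T' = 1 ∧
        ‖T'‖ ≤ C := by
  set T : H →L[ℂ] H := 1 + adjoint M * M + adjoint M + M + adjoint J * J with hTdef
  obtain ⟨c, hc, hlb⟩ := aux_lb M J hM hker
  rw [← hTdef] at hlb
  -- T is bijective
  have hanti : AntilipschitzWith (⟨c, le_of_lt hc⟩ : NNReal)⁻¹ T := by
    apply T.antilipschitz_of_bound
    intro x
    show ‖x‖ ≤ c⁻¹ * ‖T x‖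
    rw [inv_mul_eq_div, le_div_iff₀ hc]
    linarith [hlb x]
  have hdense : (LinearMap.range (T : H →ₗ[ℂ] H)).topologicalClosure = ⊤ := by
    rw [Submodule.topologicalClosure_eq_top_iff]
    rw [Submodule.eq_bot_iff]
    intro y hy
    have h0 : (inner ℂ (T y) y : ℂ) = 0 := hy (T y) (LinearMap.mem_range_self _ y)
    rw [aux_inner M J y] at h0
    have h0' : ‖(1+M) y‖^2 + ‖J y‖^2 = 0 := by exact_mod_cast h0
    have h1 : (1+M) y = 0 := by
      rw [← norm_eq_zero]
      nlinarith [norm_nonneg ((1+M) y), norm_nonneg (J y), sq_nonneg ‖(1+M) y‖, sq_nonneg ‖J y‖]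
    have h2 : J y = 0 := by
      rw [← norm_eq_zero]
      nlinarith [norm_nonneg ((1+M) y), norm_nonneg (J y), sq_nonneg ‖(1+M) y‖, sq_nonneg ‖J y‖]
    have : y ∈ LinearMap.ker (J : H →ₗ[ℂ] H) ⊓ LinearMap.ker ((1 + M : H →L[ℂ] H) : H →ₗ[ℂ] H) := ⟨h2, h1⟩
    rw [hker] at this
    simpa using this
  have hbij : Function.Bijective T :=
    T.bijective_iff_dense_range_and_antilipschitz.mpr ⟨hdense, _, hanti⟩
  -- inverse of T
  set e : H ≃L[ℂ] H := ContinuousLinearEquiv.ofBijective T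
    (LinearMap.ker_eq_bot.mpr hbij.1) (LinearMap.range_eq_top.mpr hbij.2) with he
  set S : H →L[ℂ] H := (e.symm : H →L[ℂ] H) with hS
  have hST : S * T = 1 := by
    ext x
    exact e.symm_apply_apply x
  have hTS : T * S = 1 := by
    ext x
    exact e.apply_symm_apply x
  have hSnorm : ∀ y, ‖S y‖ ≤ c⁻¹ * ‖y‖ := by
    intro y
    have h1 : c * ‖S y‖ ≤ ‖T (S y)‖ := hlb (S y)
    have h2 : T (S y) = y := by
      have := congrArg (fun f : H →L[ℂ] H => f y) hTS
      simpa [ContinuousLinearMap.mul_apply] using this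
    rw [h2] at h1
    rw [inv_mul_eq_div, le_div_iff₀ hc]
    linarith
  -- choose N
  have hev : ∀ᶠ n in atTop,
      (‖adjoint M * (1 - L n) * M‖ + ‖(1 - L n) * adjoint M‖ + ‖(1 - L n) * M‖
        + ‖adjoint J * (1 - L n) * J‖) < c / 2 :=
    hL.eventually (gt_mem_nhds (half_pos hc))
  obtain ⟨N, hN⟩ := eventually_atTop.mp hev
  refine ⟨N, 2 / c, ?_⟩
  intro n hn
  set Tn : H →L[ℂ] H := 1 + adjoint M * L n * M + L n * adjoint M + L n * M
      + adjoint J * L n * J with hTn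
  set D : H →L[ℂ] H := adjoint M * (1 - L n) * M + (1 - L n) * adjoint M + (1 - L n) * M
      + adjoint J * (1 - L n) * J with hD
  have hTnD : Tn = T - D := by
    rw [hTn, hD, hTdef]
    noncomm_ring
  have hDnorm : ‖D‖ < c / 2 := by
    calc ‖D‖ ≤ ‖adjoint M * (1 - L n) * M‖ + ‖(1 - L n) * adjoint M‖ + ‖(1 - L n) * M‖
        + ‖adjoint J * (1 - L n) * J‖ := by
          rw [hD]
          exact le_trans (norm_add_le _ _) (by
            gcongr <;> exact le_trans (norm_add_le _ _) (by gcongr <;> exact norm_add_le _ _))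
      _ < c / 2 := hN n hn
  have hSD : ‖S * D‖ < 1 := by
    calc ‖S * D‖ ≤ ‖S‖ * ‖D‖ := norm_mul_le _ _
      _ ≤ c⁻¹ * ‖D‖ :=
          mul_le_mul_of_nonneg_right (S.opNorm_le_bound (by positivity) hSnorm) (norm_nonneg D)
      _ < c⁻¹ * (c / 2) := by
          apply mul_lt_mul_of_pos_left hDnorm (by positivity)
      _ < 1 := by
          rw [inv_mul_eq_div, div_lt_one hc]
          linarith
  set u : (H →L[ℂ] H)ˣ := Units.oneSub (S * D) hSD with hu
  have huval : (u : H →L[ℂ] H) = 1 - S * D := rfl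
  have hfact : Tn = T * (u : H →L[ℂ] H) := by
    rw [huval, hTnD, mul_sub, mul_one, ← mul_assoc, hTS, one_mul]
  refine ⟨(↑u⁻¹ : H →L[ℂ] H) * S, ?_, ?_, ?_⟩
  · rw [hfact, mul_assoc (↑u⁻¹ : H →L[ℂ] H) S (T * ↑u), ← mul_assoc S T (↑u : H →L[ℂ] H),
      hST, one_mul, u.inv_mul]
  · rw [hfact, mul_assoc T (↑u : H →L[ℂ] H) _,
      ← mul_assoc (↑u : H →L[ℂ] H) (↑u⁻¹ : H →L[ℂ] H) S, u.mul_inv, one_mul, hTS]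
  · -- norm bound, using Tn lower bound
    have hTnlb : ∀ x, (c/2) * ‖x‖ ≤ ‖Tn x‖ := by
      intro x
      have h1 : ‖T x‖ - ‖D x‖ ≤ ‖Tn x‖ := by
        rw [hTnD]
        have := norm_sub_norm_le (T x) (D x)
        simpa [ContinuousLinearMap.sub_apply] using this
      have h2 : ‖D x‖ ≤ (c/2) * ‖x‖ :=
        le_trans (D.le_opNorm x) (by
          apply mul_le_mul_of_nonneg_right (le_of_lt hDnorm) (norm_nonneg x))
      have h3 := hlb x
      linarith
    have hright : Tn * ((↑u⁻¹ : H →L[ℂ] H) * S) = 1 := by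
      rw [hfact, mul_assoc T (↑u : H →L[ℂ] H) _,
        ← mul_assoc (↑u : H →L[ℂ] H) (↑u⁻¹ : H →L[ℂ] H) S, u.mul_inv, one_mul, hTS]
    apply ContinuousLinearMap.opNorm_le_bound _ (by positivity)
    intro y
    have h4 : Tn (((↑u⁻¹ : H →L[ℂ] H) * S) y) = y := by
      have := congrArg (fun f : H →L[ℂ] H => f y) hright
      simpa [ContinuousLinearMap.mul_apply] using this
    have h5 := hTnlb (((↑u⁻¹ : H →L[ℂ] H) * S) y)
    rw [h4] at h5
    rw [div_mul_eq_mul_div, le_div_iff₀ hc]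
    nlinarith [h5]
end

section
/- There exist self-adjoint (Hermitian) linear maps M, J : ℂ³ → ℂ³ such that ker(J) ∩ ker(I + M) = {0} and, for every complex number ξ, the operator I + M + ξ J is singular (not injective). Explicitly, taking I + M to be the linear map with matrix [[0,0,1],[0,0,1],[1,1,0]] and J the linear map with matrix [[1,0,0],[0,−1,0],[0,0,0]], one has (I + M + ξ J)(1, −1, −ξ) = 0 for every ξ ∈ ℂ. -/
open scoped Matrix

/-- There exist self-adjoint (Hermitian) linear maps `M, J : ℂ³ → ℂ³`
(i.e. their matrices in the standard basis equal their conjugate transposes) with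
`ker J ⊓ ker (I + M) = {0}` such that `I + M + ξ J` is singular (not injective) for every
`ξ ∈ ℂ`. Explicitly, `I + M` has matrix `[[0,0,1],[0,0,1],[1,1,0]]` and `J` has matrix
`[[1,0,0],[0,-1,0],[0,0,0]]`, and `(I + M + ξ J)(1, -1, -ξ) = 0` for every `ξ ∈ ℂ`. -/
theorem stmt_16 :
    ∃ M J : Module.End ℂ (Fin 3 → ℂ),
      (1 + M) = Matrix.toLin' !![(0 : ℂ), 0, 1; 0, 0, 1; 1, 1, 0] ∧
      J = Matrix.toLin' !![(1 : ℂ), 0, 0; 0, -1, 0; 0, 0, 0] ∧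
      (LinearMap.toMatrix' (M : (Fin 3 → ℂ) →ₗ[ℂ] (Fin 3 → ℂ)))ᴴ
        = LinearMap.toMatrix' (M : (Fin 3 → ℂ) →ₗ[ℂ] (Fin 3 → ℂ)) ∧
      (LinearMap.toMatrix' (J : (Fin 3 → ℂ) →ₗ[ℂ] (Fin 3 → ℂ)))ᴴ
        = LinearMap.toMatrix' (J : (Fin 3 → ℂ) →ₗ[ℂ] (Fin 3 → ℂ)) ∧
      LinearMap.ker J ⊓ LinearMap.ker (1 + M) = ⊥ ∧
      ∀ ξ : ℂ,
        (1 + M + ξ • J) ![1, -1, -ξ] = 0 ∧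
        ¬ Function.Injective ⇑(1 + M + ξ • J) := by
  refine ⟨Matrix.toLin' (!![(0 : ℂ), 0, 1; 0, 0, 1; 1, 1, 0] - 1),
    Matrix.toLin' !![(1 : ℂ), 0, 0; 0, -1, 0; 0, 0, 0], ?_, rfl, ?_, ?_, ?_, ?_⟩
  case refine_1 =>
    rw [map_sub, Matrix.toLin'_one, ← Module.End.one_eq_id]
    abel
  case refine_2 =>
    rw [LinearMap.toMatrix'_toLin']
    ext i j
    fin_cases i <;> fin_cases j <;>
      simp [Matrix.conjTranspose_apply, Matrix.sub_apply, Matrix.one_apply,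
        Matrix.vecHead, Matrix.vecTail]
  case refine_3 =>
    rw [LinearMap.toMatrix'_toLin']
    ext i j
    fin_cases i <;> fin_cases j <;>
      simp [Matrix.conjTranspose_apply, Matrix.vecHead, Matrix.vecTail]
  case refine_4 =>
    rw [eq_bot_iff]
    intro x hx
    simp only [Submodule.mem_inf, LinearMap.mem_ker] at hx
    obtain ⟨h1, h2⟩ := hx
    have f0 := congrFun h1 0
    have f1 := congrFun h1 1
    have e0 := congrFun h2 0
    simp [Matrix.toLin'_apply, Matrix.mulVec, dotProduct, Fin.sum_univ_three,
      LinearMap.add_apply, LinearMap.sub_apply, Matrix.sub_apply, Matrix.one_apply,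
      Matrix.vecHead, Matrix.vecTail] at e0 f0 f1
    simp only [Submodule.mem_bot]
    funext i
    fin_cases i
    · simpa using f0
    · simpa using f1
    · simpa [f0, f1] using e0
  case refine_5 =>
    intro ξ
    set L : Module.End ℂ (Fin 3 → ℂ) := 1 + Matrix.toLin' (!![(0 : ℂ), 0, 1; 0, 0, 1; 1, 1, 0] - 1)
        + ξ • Matrix.toLin' !![(1 : ℂ), 0, 0; 0, -1, 0; 0, 0, 0] with hL
    have key : L ![1, -1, -ξ] = 0 := by
      funext i
      fin_cases i <;>
        simp [hL, LinearMap.add_apply, LinearMap.smul_apply, Matrix.toLin'_apply, Matrix.mulVec,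
          dotProduct, Fin.sum_univ_three, Matrix.sub_apply, Matrix.one_apply,
          Matrix.vecHead, Matrix.vecTail]
    refine ⟨key, fun hinj => ?_⟩
    have h0 : (![1, -1, -ξ] : Fin 3 → ℂ) = 0 := hinj (by rw [key, map_zero])
    simpa using congrFun h0 0
end
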